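/- Correctness of the Bernstein–Vazirani algorithm: for any hidden string s ∈ {0,1}^n, the circuit H^{⊗(n+1)} · O_s · H^{⊗(n+1)} applied to |0⟩^{⊗n}|1⟩ yields (up to global phase −1 on the last qubit's |1⟩ contribution) the state |s₀⟩⋯|s_{n−1}⟩ ⊗ |1⟩, where O_s|x⟩|y⟩ = |x⟩|y ⊕ (s·x)⟩ with s·x = ⊕_k s_k x_k. -/
import Mathlib


open Matrix

/-- Basis states of `n+1` qubits, identified with bit strings. -/
abbrev BVBasis (n : ℕ) := Fin (n + 1) → Bool

/-- The `(n+1)`-fold tensor power of the Hadamard gate, with entries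
`(-1)^{x·y} / √(2^{n+1})`. -/
noncomputable def Hpow (n : ℕ) : Matrix (BVBasis n) (BVBasis n) ℂ :=
  Matrix.of fun x y =>
    (∏ i : Fin (n + 1), ((-1 : ℂ) ^ (if x i && y i then 1 else 0))) /
      (Real.sqrt (2 ^ (n + 1)) : ℂ)

/-- The inner product `s·x = s₀x₀ ⊕ ⋯ ⊕ s_{n-1}x_{n-1}` of the hidden string
with the first `n` bits. -/
def bvDot {n : ℕ} (s : Fin n → Bool) (x : BVBasis n) : Bool :=
  decide (Odd (∑ k : Fin n, if s k && x k.castSucc then 1 else (0 : ℕ)))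

/-- The basis-state action of the oracle `O_s : |x,y⟩ ↦ |x, y ⊕ s·x⟩`. -/
def bvFlip {n : ℕ} (s : Fin n → Bool) (b : BVBasis n) : BVBasis n :=
  Function.update b (Fin.last n) (xor (b (Fin.last n)) (bvDot s b))

/-- The oracle `O_s` as a permutation matrix. -/
def bvOracle {n : ℕ} (s : Fin n → Bool) : Matrix (BVBasis n) (BVBasis n) ℂ :=
  Matrix.of fun a b => if a = bvFlip s b then 1 else 0

/-- The input state `|0⟩^{⊗n} ⊗ |1⟩`. -/
def bvInput (n : ℕ) : BVBasis n → ℂ :=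
  fun b => if b = (fun i => decide (i = Fin.last n)) then 1 else 0

/-- The target output state `|s₀⟩⋯|s_{n-1}⟩ ⊗ |1⟩`. -/
def bvTarget {n : ℕ} (s : Fin n → Bool) : BVBasis n → ℂ :=
  fun b => if b = (fun i : Fin (n + 1) => if h : (i : ℕ) < n then s ⟨(i : ℕ), h⟩ else true) then 1 else 0

/- ### auxiliary lemmas -/

noncomputable def sg (b : Bool) : ℂ := if b then -1 else 1

lemma sg_mul_self (b : Bool) : sg b * sg b = 1 := by cases b <;> simp [sg]

lemma sg_xor (a b : Bool) : sg (xor a b) = sg a * sg b := by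
  cases a <;> cases b <;> simp [sg]

lemma neg_one_pow_ite (b : Bool) : (-1 : ℂ) ^ (if b then 1 else 0) = sg b := by
  cases b <;> simp [sg]

lemma sg_odd (m : ℕ) : sg (decide (Odd m)) = (-1 : ℂ) ^ m := by
  rcases Nat.even_or_odd m with h | h
  · simp [sg, decide_eq_false (Nat.not_odd_iff_even.mpr h), h.neg_one_pow]
  · simp [sg, decide_eq_true h, h.neg_one_pow]

noncomputable def ip {n : ℕ} (x y : BVBasis n) : ℂ := ∏ i, sg (x i && y i)

lemma Hpow_apply {n : ℕ} (x y : BVBasis n) :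
    Hpow n x y = ip x y / (Real.sqrt (2 ^ (n + 1)) : ℂ) := by
  unfold Hpow ip
  rw [Matrix.of_apply]
  congr 1
  exact Finset.prod_congr rfl fun i _ => neg_one_pow_ite _

lemma sqrt_sq' (n : ℕ) :
    ((Real.sqrt (2 ^ (n + 1)) : ℝ) : ℂ) * ((Real.sqrt (2 ^ (n + 1)) : ℝ) : ℂ)
      = (2 : ℂ) ^ (n + 1) := by
  rw [← Complex.ofReal_mul, Real.mul_self_sqrt (by positivity)]
  push_cast; ring

lemma bvDot_snoc {n : ℕ} (s : Fin n → Bool) (x : Fin n → Bool) (y : Bool) :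
    bvDot s (Fin.snoc x y) = decide (Odd (∑ k : Fin n, if s k && x k then 1 else (0 : ℕ))) := by
  simp [bvDot, Fin.snoc_castSucc]

lemma bvFlip_snoc {n : ℕ} (s : Fin n → Bool) (x : Fin n → Bool) (y : Bool) :
    bvFlip s (Fin.snoc x y) = Fin.snoc x (xor y (bvDot s (Fin.snoc x y))) := by
  unfold bvFlip
  rw [Fin.update_snoc_last, Fin.snoc_last]

lemma ip_snoc {n : ℕ} (a : BVBasis n) (x : Fin n → Bool) (z : Bool) :
    ip a (Fin.snoc x z)
      = (∏ k : Fin n, sg (a k.castSucc && x k)) * sg (a (Fin.last n) && z) := by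
  rw [ip, Fin.prod_univ_castSucc]
  simp [Fin.snoc_castSucc, Fin.snoc_last]

lemma ip_i0 {n : ℕ} (c : BVBasis n) :
    ip c (fun i => decide (i = Fin.last n)) = sg (c (Fin.last n)) := by
  rw [ip, Fin.prod_univ_castSucc]
  have h : ∀ k : Fin n,
      sg (c k.castSucc && decide ((k.castSucc : Fin (n + 1)) = Fin.last n)) = 1 := by
    intro k
    rw [decide_eq_false (Fin.castSucc_lt_last k).ne, Bool.and_false]
    rfl
  rw [Finset.prod_eq_one fun k _ => h k, one_mul, decide_eq_true rfl, Bool.and_true]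

lemma sum_pi_bool {n : ℕ} (g : Fin n → Bool → ℂ) :
    ∑ x : Fin n → Bool, ∏ k, g k (x k) = ∏ k, ∑ b : Bool, g k b := by
  rw [Finset.prod_univ_sum, Fintype.piFinset_univ]

lemma sg_dot {n : ℕ} (s x : Fin n → Bool) :
    sg (decide (Odd (∑ k : Fin n, if s k && x k then 1 else (0 : ℕ))))
      = ∏ k, sg (s k && x k) := by
  rw [sg_odd, ← Finset.prod_pow_eq_pow_sum]
  refine Finset.prod_congr rfl fun k _ => ?_
  cases h : (s k && x k) <;> simp [h, sg]

/-- Correctness of the Bernstein–Vazirani algorithm -/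
theorem bernstein_vazirani_correct (n : ℕ) (s : Fin n → Bool) :
    ∃ c : ℂ, (c = 1 ∨ c = -1) ∧
      (Hpow n * bvOracle s * Hpow n).mulVec (bvInput n) = c • bvTarget s := by
  classical
  refine ⟨1, Or.inl rfl, ?_⟩
  funext a
  set i0 : BVBasis n := fun i => decide (i = Fin.last n) with hi0
  have h1 : (Hpow n * bvOracle s * Hpow n).mulVec (bvInput n) a
      = (Hpow n * bvOracle s * Hpow n) a i0 := by
    simp [mulVec, dotProduct, bvInput, mul_ite, hi0]
  have h2 : (Hpow n * bvOracle s * Hpow n) a i0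
      = ∑ c : BVBasis n, Hpow n a (bvFlip s c) * Hpow n c i0 := by
    rw [Matrix.mul_apply]
    refine Finset.sum_congr rfl fun c _ => ?_
    rw [Matrix.mul_apply]
    simp [bvOracle, ite_mul]
  have h3 : ∑ c : BVBasis n, Hpow n a (bvFlip s c) * Hpow n c i0
      = (∑ c : BVBasis n, ip a (bvFlip s c) * ip c i0) / 2 ^ (n + 1) := by
    rw [Finset.sum_div]
    refine Finset.sum_congr rfl fun c _ => ?_
    rw [Hpow_apply, Hpow_apply, div_mul_div_comm, sqrt_sq' n]
  -- reindex the sum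
  have h4 : (∑ c : BVBasis n, ip a (bvFlip s c) * ip c i0)
      = ∑ p : Bool × (Fin n → Bool),
          ip a (bvFlip s (Fin.snoc p.2 p.1)) * ip (Fin.snoc p.2 p.1) i0 := by
    refine (Fintype.sum_equiv (Fin.snocEquiv fun _ => Bool)
      (fun p => ip a (bvFlip s (Fin.snoc p.2 p.1)) * ip (Fin.snoc p.2 p.1) i0)
      (fun c => ip a (bvFlip s c) * ip c i0) fun p => ?_).symm
    have : (Fin.snocEquiv fun _ => Bool) p = Fin.snoc p.2 p.1 := by
      funext i; simp [Fin.snocEquiv]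
    rw [this]
  set Q : (Fin n → Bool) → ℂ := fun x => ∏ k, sg (a k.castSucc && x k) with hQ
  have h5 : ∀ (y : Bool) (x : Fin n → Bool),
      ip a (bvFlip s (Fin.snoc x y)) * ip (Fin.snoc x y) i0
        = Q x * sg (a (Fin.last n) && xor y (bvDot s (Fin.snoc x y))) * sg y := by
    intro y x
    rw [bvFlip_snoc, ip_snoc, hi0, ip_i0, Fin.snoc_last]
  rw [h1, h2, h3, h4, Fintype.sum_prod_type]
  rcases Bool.eq_false_or_eq_true (a (Fin.last n)) with hal | hal
  · -- a (last) = true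
    have hy : ∀ y : Bool, (∑ x : Fin n → Bool,
        ip a (bvFlip s (Fin.snoc x y)) * ip (Fin.snoc x y) i0)
          = ∑ x : Fin n → Bool, Q x * (∏ k, sg (s k && x k)) := by
      intro y
      refine Finset.sum_congr rfl fun x _ => ?_
      rw [h5 y x, hal, Bool.true_and, bvDot_snoc, sg_xor, sg_dot]
      rw [show Q x * (sg y * ∏ k, sg (s k && x k)) * sg y
            = Q x * (∏ k, sg (s k && x k)) * (sg y * sg y) from by ring,
        sg_mul_self, mul_one]
    rw [Fintype.sum_bool, hy true, hy false, ← two_mul]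
    have h6 : (∑ x : Fin n → Bool, Q x * ∏ k, sg (s k && x k))
        = ∏ k : Fin n, (if a k.castSucc = s k then (2 : ℂ) else 0) := by
      have hpm : ∀ x : Fin n → Bool, Q x * (∏ k, sg (s k && x k))
          = ∏ k, (sg (a k.castSucc && x k) * sg (s k && x k)) := by
        intro x; rw [hQ, ← Finset.prod_mul_distrib]
      simp_rw [hpm]
      rw [sum_pi_bool fun k b => sg (a k.castSucc && b) * sg (s k && b)]
      refine Finset.prod_congr rfl fun k _ => ?_
      rcases Bool.eq_false_or_eq_true (a k.castSucc) with h | h <;>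
        rcases Bool.eq_false_or_eq_true (s k) with h' | h' <;>
          simp [h, h', sg, Fintype.sum_bool] <;> norm_num
    rw [h6]
    by_cases hall : ∀ k : Fin n, a k.castSucc = s k
    · have heq : a = (fun i : Fin (n + 1) => if h : (i : ℕ) < n then s ⟨(i : ℕ), h⟩ else true) := by
        funext i
        refine Fin.lastCases ?_ (fun k => ?_) i
        · rw [hal]; simp
        · have hk : ((k.castSucc : Fin (n + 1)) : ℕ) < n := k.isLt
          rw [hall k]
          simp [hk]
      rw [Finset.prod_congr rfl fun k _ => if_pos (hall k), Finset.prod_const,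
        Finset.card_univ, Fintype.card_fin]
      have htgt : ((1 : ℂ) • bvTarget s) a = 1 := by simp [bvTarget, heq]
      rw [htgt, div_eq_one_iff_eq (pow_ne_zero _ two_ne_zero), pow_succ]
      ring
    · push_neg at hall
      obtain ⟨k, hk⟩ := hall
      have hzero : (∏ k : Fin n, (if a k.castSucc = s k then (2 : ℂ) else 0)) = 0 :=
        Finset.prod_eq_zero (Finset.mem_univ k) (if_neg hk)
      have hne : a ≠ (fun i : Fin (n + 1) => if h : (i : ℕ) < n then s ⟨(i : ℕ), h⟩ else true) := by
        intro h
        apply hk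
        have hck := congrFun h k.castSucc
        rw [hck]
        simp [k.isLt]
      rw [hzero, one_smul]
      simp [bvTarget, hne]
  · -- a (last) = false : sum is 0, and target is 0
    have hz : ∀ y : Bool, (∑ x : Fin n → Bool,
        ip a (bvFlip s (Fin.snoc x y)) * ip (Fin.snoc x y) i0)
          = sg y * ∑ x : Fin n → Bool, Q x := by
      intro y
      rw [Finset.mul_sum]
      refine Finset.sum_congr rfl fun x _ => ?_
      rw [h5 y x, hal, Bool.false_and]
      cases y <;> simp [sg] <;> ring
    have hsum : sg true * (∑ x : Fin n → Bool, Q x)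
        + sg false * (∑ x : Fin n → Bool, Q x) = 0 := by
      simp [sg]
    have hne : a ≠ (fun i : Fin (n + 1) => if h : (i : ℕ) < n then s ⟨(i : ℕ), h⟩ else true) := by
      intro h
      have hl := congrFun h (Fin.last n)
      rw [hal] at hl
      simp at hl
    rw [Fintype.sum_bool, hz true, hz false, hsum, zero_div, one_smul]
    simp [bvTarget, hne]
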